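/- Sum formula for dual Horadam quaternions: if α ≠ 1 and β ≠ 1, then for every natural number n, Σ_{i=0}^{n} Ĝᵢ = d₁ + d₂·ε, where d₁ = Σ_{i=0}^{n} Gᵢ = (1/(α−β))·( B·β̲·βⁿ⁺¹/(1−β) − A·α̲·αⁿ⁺¹/(1−α) ) + K and d₂ = Σ_{i=1}^{n+1} Gᵢ = (1/(α−β))·( B·β̲·βⁿ⁺²/(1−β) − A·α̲·αⁿ⁺²/(1−α) ) − G₀ + K, with K = (A·α̲·(1−β) − B·β̲·(1−α)) / ((α−β)(1−α)(1−β)). -/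

import Mathlib

open Quaternion DualNumber TrivSqZeroExt

/-- The Horadam sequence `w(a,b;p,q)`: `w₀ = a`, `w₁ = b`,
`wₙ = p·wₙ₋₁ + q·wₙ₋₂` for `n ≥ 2`. -/
def horadam (a b p q : ℝ) : ℕ → ℝ
  | 0 => a
  | 1 => b
  | n + 2 => p * horadam a b p q (n + 1) + q * horadam a b p q n

/-- The `n`-th Horadam quaternion `Gₙ = wₙ + wₙ₊₁·i + wₙ₊₂·j + wₙ₊₃·k`. -/
def horadamQ (a b p q : ℝ) (n : ℕ) : ℍ[ℝ] :=
  ⟨horadam a b p q n, horadam a b p q (n + 1), horadam a b p q (n + 2), horadam a b p q (n + 3)⟩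

/-- The `n`-th dual Horadam quaternion `Ĝₙ = Gₙ + Gₙ₊₁·ε`, an element of the
dual numbers over `ℍ[ℝ]`, where `ε² = 0`. -/
noncomputable def dualHoradamQ (a b p q : ℝ) (n : ℕ) : DualNumber ℍ[ℝ] :=
  inl (horadamQ a b p q n) + inl (horadamQ a b p q (n + 1)) * ε

/-! Binet's formula gives `(α - β) • Gₙ = (A αⁿ) • α̲ - (B βⁿ) • β̲` (with `α̲ = quatPowers α`),
so `Σ Gᵢ` is a combination of two geometric sums, summed by `geom_sum_eq`. The `ε`-part of
`Σ Ĝᵢ` is the same sum shifted by one index, i.e. the next partial sum minus `G₀`. -/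

open Finset

theorem DualNumber.sum_inl_add_inl_mul_eps {ι R : Type*} [Semiring R] (s : Finset ι)
    (f g : ι → R) :
    ∑ i ∈ s, (inl (f i) + inl (g i) * ε : R[ε]) = inl (∑ i ∈ s, f i) + inl (∑ i ∈ s, g i) * ε := by
  simp only [sum_add_distrib, ← sum_mul, inl_sum]

theorem Finset.sum_Icc_one_eq_sum_range_add_one {M : Type*} [AddCommMonoid M] (f : ℕ → M)
    (n : ℕ) : ∑ i ∈ Icc 1 n, f i = ∑ i ∈ range n, f (i + 1) := by
  rw [range_eq_Ico, sum_Ico_add', zero_add, Ico_add_one_right_eq_Icc]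

def quatPowers (x : ℝ) : ℍ[ℝ] := ⟨1, x, x ^ 2, x ^ 3⟩

section Binet

variable {a b p q α β : ℝ}

theorem horadam_binet (hα : α ^ 2 = p * α + q) (hβ : β ^ 2 = p * β + q) (n : ℕ) :
    (α - β) * horadam a b p q n = (b - a * β) * α ^ n - (b - a * α) * β ^ n := by
  induction n using Nat.twoStepInduction with
  | zero => simp only [horadam]; ring
  | one => simp only [horadam]; ring
  | more n ih₀ ih₁ =>
    simp only [horadam]
    linear_combination p * ih₁ + q * ih₀ - (b - a * β) * α ^ n * hα + (b - a * α) * β ^ n * hβ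

theorem horadamQ_binet (hα : α ^ 2 = p * α + q) (hβ : β ^ 2 = p * β + q) (n : ℕ) :
    (α - β) • horadamQ a b p q n =
      ((b - a * β) * α ^ n) • quatPowers α - ((b - a * α) * β ^ n) • quatPowers β := by
  ext <;>
    simp only [re_smul, imI_smul, imJ_smul, imK_smul, re_sub, imI_sub, imJ_sub, imK_sub,
      smul_eq_mul] <;>
    simp only [horadamQ, quatPowers, horadam_binet hα hβ] <;>
    ring

theorem sum_horadamQ_range (hα : α ^ 2 = p * α + q) (hβ : β ^ 2 = p * β + q) (hαβ : α ≠ β)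
    (hα1 : α ≠ 1) (hβ1 : β ≠ 1) (m : ℕ) :
    ∑ i ∈ range m, horadamQ a b p q i = (α - β)⁻¹ •
      (((b - a * β) * ((α ^ m - 1) / (α - 1))) • quatPowers α -
        ((b - a * α) * ((β ^ m - 1) / (β - 1))) • quatPowers β) := by
  rw [eq_inv_smul_iff₀ (sub_ne_zero.mpr hαβ), smul_sum]
  simp only [horadamQ_binet hα hβ, sum_sub_distrib, ← sum_smul, ← mul_sum, geom_sum_eq hα1,
    geom_sum_eq hβ1]

end Binet

/-- Sum formula for dual Horadam quaternions: `Σ_{i=0}^{n} Ĝᵢ = d₁ + d₂·ε` where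
`d₁ = Σ_{i=0}^{n} Gᵢ` and `d₂ = Σ_{i=1}^{n+1} Gᵢ` have the stated Binet closed forms. -/
theorem dualHoradamQ_sum (a b p q : ℝ) (hpq : p ^ 2 + 4 * q > 0)
    (α β A B : ℝ)
    (hα : α = (p + Real.sqrt (p ^ 2 + 4 * q)) / 2)
    (hβ : β = (p - Real.sqrt (p ^ 2 + 4 * q)) / 2)
    (hA : A = b - a * β) (hB : B = b - a * α)
    (hα1 : α ≠ 1) (hβ1 : β ≠ 1)
    (αq βq K : ℍ[ℝ])
    (hαq : αq = ⟨1, α, α ^ 2, α ^ 3⟩) (hβq : βq = ⟨1, β, β ^ 2, β ^ 3⟩)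
    (hK : K = ((α - β) * (1 - α) * (1 - β))⁻¹ • ((A * (1 - β)) • αq - (B * (1 - α)) • βq)) :
    ∀ n : ℕ,
      (∑ i ∈ Finset.range (n + 1), dualHoradamQ a b p q i =
          inl ((α - β)⁻¹ •
              ((B * β ^ (n + 1) / (1 - β)) • βq - (A * α ^ (n + 1) / (1 - α)) • αq) + K) +
            inl ((α - β)⁻¹ •
              ((B * β ^ (n + 2) / (1 - β)) • βq - (A * α ^ (n + 2) / (1 - α)) • αq) -
              horadamQ a b p q 0 + K) * ε) ∧
      (∑ i ∈ Finset.range (n + 1), horadamQ a b p q i =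
          (α - β)⁻¹ •
            ((B * β ^ (n + 1) / (1 - β)) • βq - (A * α ^ (n + 1) / (1 - α)) • αq) + K) ∧
      (∑ i ∈ Finset.Icc 1 (n + 1), horadamQ a b p q i =
          (α - β)⁻¹ •
            ((B * β ^ (n + 2) / (1 - β)) • βq - (A * α ^ (n + 2) / (1 - α)) • αq) -
            horadamQ a b p q 0 + K) := by
  have hsq := Real.sq_sqrt hpq.le
  have hαβ : α ≠ β := by
    rw [hα, hβ]; linarith [Real.sqrt_pos.mpr hpq]
  have hrα : α ^ 2 = p * α + q := by rw [hα]; linear_combination hsq / 4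
  have hrβ : β ^ 2 = p * β + q := by rw [hβ]; linear_combination hsq / 4
  obtain rfl : αq = quatPowers α := hαq
  obtain rfl : βq = quatPowers β := hβq
  have hd₁ : ∀ m : ℕ, ∑ i ∈ range (m + 1), horadamQ a b p q i = (α - β)⁻¹ •
      ((B * β ^ (m + 1) / (1 - β)) • quatPowers β - (A * α ^ (m + 1) / (1 - α)) • quatPowers α) +
        K := by
    intro m
    rw [sum_horadamQ_range hrα hrβ hαβ hα1 hβ1, hK, hA, hB]
    match_scalars <;> field_simp <;> ring
  have hd₂ : ∀ m : ℕ, ∑ i ∈ range (m + 1), horadamQ a b p q (i + 1) = (α - β)⁻¹ •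
      ((B * β ^ (m + 2) / (1 - β)) • quatPowers β - (A * α ^ (m + 2) / (1 - α)) • quatPowers α) -
        horadamQ a b p q 0 + K := fun m => by
    rw [eq_sub_of_add_eq (sum_range_succ' (horadamQ a b p q) (m + 1)).symm, hd₁ (m + 1),
      add_sub_right_comm]
  intro n
  refine ⟨?_, hd₁ n, (sum_Icc_one_eq_sum_range_add_one _ _).trans (hd₂ n)⟩
  simp only [dualHoradamQ, DualNumber.sum_inl_add_inl_mul_eps, hd₁, hd₂]
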